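/- Let A be an abelian category with enough projectives and T a tilting subcategory (weak tilting and contravariantly finite). Then (Fac T, T⊥) is a torsion pair in A, where T⊥ = {A : Hom(T, A) = 0 for all T ∈ T}. -/

import Mathlib

open CategoryTheory Category Limits

attribute [local instance] CategoryTheory.Abelian.hasFiniteBiproducts
attribute [local instance] CategoryTheory.Limits.HasFiniteBiproducts.of_hasFiniteProducts

universe w v u

namespace Paper

variable {A : Type u} [Category.{v} A] [Abelian A]

/-- `IsSes i p` expresses that `0 ⟶ X ⟶ Y ⟶ Z ⟶ 0` is a short exact sequence. -/
def IsSes {X Y Z : A} (i : X ⟶ Y) (p : Y ⟶ Z) : Prop :=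
  ∃ w : i ≫ p = 0, (ShortComplex.mk i p w).ShortExact

/-- `Ext¹(X, Y) = 0`, phrased as: every extension of `X` by `Y` splits. -/
def Ext1Zero (X Y : A) : Prop :=
  ∀ ⦃E : A⦄ (i : Y ⟶ E) (p : E ⟶ X), IsSes i p → ∃ s : X ⟶ E, s ≫ p = 𝟙 X

/-- A torsion pair `(T, F)` of (strictly full) subcategories of an abelian category. -/
structure IsTorsionPair (T F : Set A) : Prop where
  isoClosed_torsion : ∀ {X Y : A}, (X ≅ Y) → X ∈ T → Y ∈ T
  isoClosed_torsionFree : ∀ {X Y : A}, (X ≅ Y) → X ∈ F → Y ∈ F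
  hom_zero : ∀ {X Y : A}, X ∈ T → Y ∈ F → ∀ f : X ⟶ Y, f = 0
  seq : ∀ X : A, ∃ (tX fX : A) (i : tX ⟶ X) (p : X ⟶ fX), tX ∈ T ∧ fX ∈ F ∧ IsSes i p

/-- A (complete) cotorsion pair `(C, D)` in an abelian category. -/
structure IsCotorsionPair (C D : Set A) : Prop where
  left_eq : C = {X : A | ∀ Y ∈ D, Ext1Zero X Y}
  right_eq : D = {Y : A | ∀ X ∈ C, Ext1Zero X Y}
  seq₁ : ∀ X : A, ∃ (dX cX : A) (i : dX ⟶ cX) (p : cX ⟶ X), dX ∈ D ∧ cX ∈ C ∧ IsSes i p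
  seq₂ : ∀ X : A, ∃ (dX cX : A) (i : X ⟶ dX) (p : dX ⟶ cX), dX ∈ D ∧ cX ∈ C ∧ IsSes i p

/-- `f` factors through some object belonging to the class `P`. -/
def FactorsThroughClass (P : Set A) {X Y : A} (f : X ⟶ Y) : Prop :=
  ∃ (Z : A) (_ : Z ∈ P) (a : X ⟶ Z) (b : Z ⟶ Y), a ≫ b = f

/-- The hom-relation on the full subcategory on `S` identifying two morphisms whose
difference factors through an object of `P`. -/
def quotRel (S P : Set A) : HomRel (ObjectProperty.FullSubcategory (· ∈ S)) :=
  fun {X Y} f g =>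
    FactorsThroughClass P ((show X.obj ⟶ Y.obj from f.hom) - (show X.obj ⟶ Y.obj from g.hom))

/-- The additive quotient of the full subcategory on `S` by the morphisms factoring
through objects of `P`. -/
abbrev AddQuot (S P : Set A) := CategoryTheory.Quotient (quotRel S P)

/-- The subcategory of quotients of (finite direct sums of) objects of `T`. -/
def Fac (T : Set A) : Set A := {X : A | ∃ Y ∈ T, ∃ p : Y ⟶ X, Epi p}

/-- The right `Hom`-orthogonal `T^⊥`. -/
def rightHomPerp (T : Set A) : Set A := {X : A | ∀ Y ∈ T, ∀ f : Y ⟶ X, f = 0}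

/-- The left `Hom`-orthogonal `^⊥F`. -/
def leftHomPerp (F : Set A) : Set A := {X : A | ∀ Y ∈ F, ∀ f : X ⟶ Y, f = 0}

/-- The right `Ext¹`-orthogonal `T^{⊥₁}`. -/
def rightExt1Perp (T : Set A) : Set A := {X : A | ∀ Y ∈ T, Ext1Zero Y X}

/-- The left `Ext¹`-orthogonal `^{⊥₁}D`. -/
def leftExt1Perp (D : Set A) : Set A := {X : A | ∀ Y ∈ D, Ext1Zero X Y}

/-- `X` has projective dimension at most one: it has a length-one projective resolution. -/
def PdLeOne (X : A) : Prop :=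
  ∃ (P₁ P₀ : A) (i : P₁ ⟶ P₀) (p : P₀ ⟶ X), Projective P₁ ∧ Projective P₀ ∧ IsSes i p

/-- A weak tilting subcategory of an abelian category with enough projectives. -/
structure IsWeakTilting (T : Set A) : Prop where
  sum_mem : ∀ {X Y : A}, X ∈ T → Y ∈ T → (X ⊞ Y) ∈ T
  summand_mem : ∀ {X Y : A}, X ∈ T → (∃ (s : Y ⟶ X) (r : X ⟶ Y), s ≫ r = 𝟙 Y) → Y ∈ T
  ext1_zero : ∀ {X Y : A}, X ∈ T → Y ∈ T → Ext1Zero X Y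
  pd_le_one : ∀ X ∈ T, PdLeOne X
  coresolution : ∀ P : A, Projective P → ∃ (T₀ T₁ : A) (i : P ⟶ T₀) (p : T₀ ⟶ T₁),
    T₀ ∈ T ∧ T₁ ∈ T ∧ IsSes i p

/-- `φ : X ⟶ E` is a right `T`-approximation of `E`. -/
def IsRightApprox (T : Set A) {X E : A} (φ : X ⟶ E) : Prop :=
  X ∈ T ∧ ∀ X' ∈ T, ∀ f : X' ⟶ E, ∃ g : X' ⟶ X, g ≫ φ = f

/-- A tilting subcategory: a weak tilting subcategory that is contravariantly finite. -/
structure IsTilting (T : Set A) extends IsWeakTilting T : Prop where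
  contravariantly_finite : ∀ E : A, ∃ (X : A) (φ : X ⟶ E), IsRightApprox T φ


/-!
Take a right `T`-approximation `φ : T₀ ⟶ X`. Its image lies in `Fac T`, and every `f : T' ⟶ coker φ`
with `T' ∈ T` vanishes: since `pd T' ≤ 1`, `Ext¹(T', -)` is right exact, so
`Ext¹(T', im φ) = 0` follows from `Ext¹(T', T₀) = 0` (concretely: for a projective resolution
`0 → P₁ → P₀ → T' → 0`, `Ext¹(T', M) = 0` iff every `P₁ ⟶ M` extends to `P₀`); hence `f` lifts to `T' ⟶ X`, which factors
through `φ` and so dies in the cokernel.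
-/

namespace IsSes

variable {X Y Z : A} {i : X ⟶ Y} {p : Y ⟶ Z}

lemma comp_eq_zero (h : IsSes i p) : i ≫ p = 0 :=
  h.choose

lemma shortExact (h : IsSes i p) : (ShortComplex.mk i p h.comp_eq_zero).ShortExact :=
  h.choose_spec

lemma mono (h : IsSes i p) : Mono i :=
  h.shortExact.mono_f

lemma epi (h : IsSes i p) : Epi p :=
  h.shortExact.epi_g

lemma exists_lift (h : IsSes i p) {W : A} (k : W ⟶ Y) (hk : k ≫ p = 0) :
    ∃ l : W ⟶ X, l ≫ i = k :=
  have := h.mono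
  ⟨h.shortExact.exact.lift k hk, h.shortExact.exact.lift_f k hk⟩

lemma exists_desc (h : IsSes i p) {W : A} (k : Y ⟶ W) (hk : i ≫ k = 0) :
    ∃ d : Z ⟶ W, p ≫ d = k :=
  have := h.epi
  ⟨h.shortExact.exact.desc k hk, h.shortExact.exact.g_desc k hk⟩

lemma pullback (h : IsSes i p) {W : A} (f : W ⟶ Z) :
    IsSes (pullback.lift i 0 (by rw [h.comp_eq_zero, zero_comp]) : X ⟶ pullback p f)
      (pullback.snd p f) := by
  have := h.mono
  have := h.epi
  refine ⟨pullback.lift_snd _ _ _, .mk' ?_ (mono_of_mono_fac (pullback.lift_fst _ _ _))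
    (Abelian.epi_pullback_of_epi_f p f)⟩
  rw [ShortComplex.exact_iff_exact_up_to_refinements]
  intro V x hx
  obtain ⟨l, hl⟩ := h.exists_lift (x ≫ pullback.fst p f)
    (by rw [assoc, pullback.condition, reassoc_of% hx, zero_comp])
  refine ⟨V, 𝟙 V, inferInstance, l, pullback.hom_ext ?_ ?_⟩
  · rw [id_comp, assoc, pullback.lift_fst, hl]
  · rw [id_comp, assoc, pullback.lift_snd, comp_zero, hx]

lemma pushout (h : IsSes i p) {W : A} (g : X ⟶ W) :
    IsSes (pushout.inr i g)
      (pushout.desc p 0 (by rw [h.comp_eq_zero, comp_zero]) : pushout i g ⟶ Z) := by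
  have := h.mono
  have := h.epi
  refine ⟨pushout.inr_desc _ _ _, .mk' ?_ (Abelian.mono_pushout_of_mono_f i g)
    (epi_of_epi_fac (pushout.inl_desc _ _ _))⟩
  rw [ShortComplex.exact_iff_exact_up_to_refinements]
  intro V x hx
  obtain ⟨V₁, π₁, _, y, w, hyw⟩ := (IsPushout.of_hasPushout i g).hom_eq_add_up_to_refinements x
  have hy : y ≫ p = 0 := by
    have := hyw =≫ pushout.desc p 0 (by rw [h.comp_eq_zero, comp_zero])
    rwa [assoc, hx, comp_zero, Preadditive.add_comp, assoc, assoc, pushout.inl_desc,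
      pushout.inr_desc, comp_zero, add_zero, eq_comm] at this
  obtain ⟨l, hl⟩ := h.exists_lift y hy
  refine ⟨V₁, π₁, inferInstance, l ≫ g + w, ?_⟩
  rw [hyw, ← hl, assoc, pushout.condition, Preadditive.add_comp, assoc]

lemma exists_lift_of_ext1Zero (h : IsSes i p) {W : A} (hW : Ext1Zero W X) (f : W ⟶ Z) :
    ∃ g : W ⟶ Y, g ≫ p = f := by
  obtain ⟨s, hs⟩ := hW _ _ (h.pullback f)
  exact ⟨s ≫ pullback.fst p f, by rw [assoc, pullback.condition, reassoc_of% hs]⟩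

lemma exists_extension_of_ext1Zero (h : IsSes i p) {W : A} (hW : Ext1Zero Z W) (g : X ⟶ W) :
    ∃ e : Y ⟶ W, i ≫ e = g := by
  have hpo := h.pushout g
  have := hpo.mono
  obtain ⟨s, hs⟩ := hW _ _ hpo
  obtain ⟨e, he⟩ := hpo.exists_lift (pushout.inl i g - p ≫ s)
    (by simp [Preadditive.sub_comp, hs, pushout.inl_desc])
  refine ⟨e, ?_⟩
  rw [← cancel_mono (pushout.inr i g), assoc, he, Preadditive.comp_sub,
    reassoc_of% h.comp_eq_zero, zero_comp, sub_zero, pushout.condition]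

lemma ext1Zero_of_forall_exists_extension (h : IsSes i p) [Projective Y] {W : A}
    (hext : ∀ g : X ⟶ W, ∃ e : Y ⟶ W, i ≫ e = g) : Ext1Zero Z W := by
  intro E ι q hq
  have := hq.epi
  obtain ⟨α, hα⟩ := hq.exists_lift (i ≫ Projective.factorThru p q)
    (by simp [h.comp_eq_zero])
  obtain ⟨γ, hγ⟩ := hext α
  obtain ⟨s, hs⟩ := h.exists_desc (Projective.factorThru p q - γ ≫ ι)
    (by rw [Preadditive.comp_sub, reassoc_of% hγ, hα, sub_self])
  have := h.epi
  refine ⟨s, ?_⟩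
  rw [← cancel_epi p, reassoc_of% hs, Preadditive.sub_comp, assoc, hq.comp_eq_zero, comp_zero,
    sub_zero, Projective.factorThru_comp, comp_id]

end IsSes

lemma Ext1Zero.of_epi {X M Q : A} (hX : PdLeOne X) (hM : Ext1Zero X M) (π : M ⟶ Q) [Epi π] :
    Ext1Zero X Q := by
  obtain ⟨P₁, P₀, i, p, _, _, hres⟩ := hX
  refine hres.ext1Zero_of_forall_exists_extension fun g => ?_
  obtain ⟨e, he⟩ := hres.exists_extension_of_ext1Zero hM (Projective.factorThru g π)
  exact ⟨e ≫ π, by rw [reassoc_of% he, Projective.factorThru_comp]⟩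

lemma isSes_image_ι_cokernel_π {X Y : A} (φ : X ⟶ Y) :
    IsSes (Abelian.image.ι φ) (cokernel.π φ) :=
  ⟨kernel.condition _, .mk' (ShortComplex.exact_of_f_is_kernel _ (kernelIsKernel _))
    inferInstance inferInstance⟩

lemma cokernel_mem_rightHomPerp_of_isRightApprox {T : Set A} {X E : A} {φ : X ⟶ E}
    (hφ : IsRightApprox T φ) (hext : ∀ Y ∈ T, Ext1Zero Y (Abelian.image φ)) :
    cokernel φ ∈ rightHomPerp T := by
  intro Y hY f
  obtain ⟨g, hg⟩ := (isSes_image_ι_cokernel_π φ).exists_lift_of_ext1Zero (hext Y hY) f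
  obtain ⟨h, rfl⟩ := hφ.2 Y hY g
  rw [← hg, assoc, cokernel.condition, comp_zero]

lemma isTorsionPair_fac_rightHomPerp {T : Set A}
    (hseq : ∀ X : A, ∃ (tX fX : A) (i : tX ⟶ X) (p : X ⟶ fX),
      tX ∈ Fac T ∧ fX ∈ rightHomPerp T ∧ IsSes i p) :
    IsTorsionPair (Fac T) (rightHomPerp T) where
  isoClosed_torsion := by
    rintro X Y e ⟨Z, hZ, p, _⟩
    exact ⟨Z, hZ, p ≫ e.hom, inferInstance⟩
  isoClosed_torsionFree := by
    intro X Y e hX Z hZ f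
    rw [← cancel_mono e.inv, hX Z hZ (f ≫ e.inv), zero_comp]
  hom_zero := by
    rintro X Y ⟨Z, hZ, p, _⟩ hY f
    rw [← cancel_epi p, hY Z hZ (p ≫ f), comp_zero]
  seq := hseq

theorem statement11_general {T : Set A} (hT : IsTilting T) :
    IsTorsionPair (Fac T) (rightHomPerp T) := by
  refine isTorsionPair_fac_rightHomPerp fun X => ?_
  obtain ⟨X₀, φ, hφ⟩ := hT.contravariantly_finite X
  have hext : ∀ Y ∈ T, Ext1Zero Y (Abelian.image φ) := fun Y hY =>
    (hT.ext1_zero hY hφ.1).of_epi (hT.pd_le_one Y hY) (Abelian.factorThruImage φ)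
  exact ⟨_, _, _, _, ⟨X₀, hφ.1, Abelian.factorThruImage φ, inferInstance⟩,
    cokernel_mem_rightHomPerp_of_isRightApprox hφ hext, isSes_image_ι_cokernel_π φ⟩

/-- For a tilting subcategory `T` of an abelian category with enough
projectives, `(Fac T, T^⊥)` is a torsion pair. -/
theorem statement11 [EnoughProjectives A] {T : Set A} (hT : IsTilting T) :
    IsTorsionPair (Fac T) (rightHomPerp T) :=
  statement11_general hT

end Paper
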